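/- E_Hmin is invariant under attaching an unentangled ancilla: for any multipartite pure state |ψ⟩ and any unit vector |φ⟩ (ancilla), E_Hmin(|ψ⟩ ⊗ |φ⟩) = E_Hmin(|ψ⟩). -/

import Mathlib

open scoped BigOperators

/-- Shannon entropy of a finite family of reals (with the convention `0 log 0 = 0`). -/
noncomputable def Hsh {ι : Type*} [Fintype ι] (p : ι → ℝ) : ℝ :=
  ∑ i, Real.negMulLog (p i)

/-- Measurement entropy of a multipartite pure state: Shannon entropy of the squared
moduli of the computational-basis amplitudes. -/
noncomputable def Hmeas {ι : Type*} [Fintype ι] [DecidableEq ι] {d : ι → ℕ}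
    (ψ : (∀ k, Fin (d k)) → ℂ) : ℝ :=
  ∑ i, Real.negMulLog (‖ψ i‖ ^ 2)

/-- Application of a local (one-subsystem-wise) linear transformation
`U_1 ⊗ ... ⊗ U_n` to a multipartite state. -/
noncomputable def applyLocal {ι : Type*} [Fintype ι] [DecidableEq ι] {d : ι → ℕ}
    (U : ∀ k, Matrix (Fin (d k)) (Fin (d k)) ℂ) (ψ : (∀ k, Fin (d k)) → ℂ) :
    (∀ k, Fin (d k)) → ℂ :=
  fun i => ∑ j, (∏ k, U k (i k) (j k)) * ψ j

/-- `E_Hmin`: the minimum over local unitaries of the measurement entropy. -/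
noncomputable def EHmin {ι : Type*} [Fintype ι] [DecidableEq ι] {d : ι → ℕ}
    (ψ : (∀ k, Fin (d k)) → ℂ) : ℝ :=
  ⨅ U : ∀ k, Matrix.unitaryGroup (Fin (d k)) ℂ,
    Hmeas (applyLocal (fun k => (U k : Matrix (Fin (d k)) (Fin (d k)) ℂ)) ψ)

/-!
A local unitary on system and ancilla is a pair `(U, V)`, and it maps `ψ ⊗ φ` to `Uψ ⊗ Vφ`.
The Shannon entropy of a product distribution splits, so the measurement entropy of the image is
`H(Uψ) + ‖ψ‖² H(Vφ)`. The second term is nonnegative and vanishes for a unitary `V` sending `φ`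
to a basis vector, so the infimum over `(U, V)` equals the infimum over `U`.
-/

open Matrix

namespace Matrix

section Unitary

variable {𝕜 n : Type*} [RCLike 𝕜] [Fintype n] [DecidableEq n]

theorem sum_norm_sq_mulVec_of_mem_unitaryGroup {A : Matrix n n 𝕜} (hA : A ∈ unitaryGroup n 𝕜)
    (v : n → 𝕜) : ∑ i, ‖(A *ᵥ v) i‖ ^ 2 = ∑ i, ‖v i‖ ^ 2 := by
  have h := ContinuousLinearMap.norm_map_of_mem_unitary
    (Unitary.map_mem (toEuclideanCLM (n := n) (𝕜 := 𝕜)) hA) (WithLp.toLp 2 v)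
  rw [toEuclideanCLM_toLp] at h
  rw [← EuclideanSpace.norm_sq_eq (WithLp.toLp 2 (A *ᵥ v)), h, EuclideanSpace.norm_sq_eq]

theorem exists_mem_unitaryGroup_mulVec_eq_single (i₀ : n) {v : n → 𝕜}
    (hv : ∑ i, ‖v i‖ ^ 2 = 1) : ∃ V ∈ unitaryGroup n 𝕜, V *ᵥ v = Pi.single i₀ 1 := by
  have hv₁ : Orthonormal 𝕜 (({i₀} : Set n).domRestrict fun _ => WithLp.toLp 2 v) :=
    orthonormal_subsingleton_iff.mpr fun _ => by simp [EuclideanSpace.norm_eq, hv]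
  obtain ⟨b, hb⟩ := hv₁.exists_orthonormalBasis_extension_of_card_eq (by simp)
  -- the columns of `M` are the vectors of `b`, the `i₀`-th being `v`; hence `Mᴴ v = e_{i₀}`
  set M := (EuclideanSpace.basisFun n 𝕜).toBasis.toMatrix b
  have hM : M ∈ unitaryGroup n 𝕜 :=
    (EuclideanSpace.basisFun n 𝕜).toMatrix_orthonormalBasis_mem_unitary b
  have hMv : M *ᵥ Pi.single i₀ 1 = v := by
    ext i
    simp [M, hb i₀ rfl, Module.Basis.toMatrix_apply]
  refine ⟨star M, Unitary.star_mem hM, ?_⟩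
  rw [← hMv, mulVec_mulVec, Unitary.star_mul_self_of_mem hM, one_mulVec]

end Unitary

section PiKron

variable {ι R : Type*} [Fintype ι] [CommRing R] {l m n : ι → Type*}

def piKron (U : ∀ k, Matrix (l k) (m k) R) : Matrix (∀ k, l k) (∀ k, m k) R :=
  of fun i j => ∏ k, U k (i k) (j k)

theorem piKron_mul_piKron [DecidableEq ι] [∀ k, Fintype (m k)] (U : ∀ k, Matrix (l k) (m k) R)
    (V : ∀ k, Matrix (m k) (n k) R) : piKron U * piKron V = piKron fun k => U k * V k := by
  ext i j
  simp only [piKron, mul_apply, of_apply, Fintype.prod_sum, Finset.prod_mul_distrib]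

theorem conjTranspose_piKron [StarRing R] (U : ∀ k, Matrix (l k) (m k) R) :
    (piKron U)ᴴ = piKron fun k => (U k)ᴴ := by
  ext i j
  simp only [piKron, conjTranspose_apply, of_apply, star_prod]

theorem piKron_one [∀ k, DecidableEq (m k)] :
    piKron (fun k => (1 : Matrix (m k) (m k) R)) = 1 := by
  ext i j
  simp only [piKron, one_apply, of_apply, Fintype.prod_boole, funext_iff]

theorem piKron_mem_unitaryGroup [DecidableEq ι] [StarRing R] [∀ k, Fintype (m k)]
    [∀ k, DecidableEq (m k)] {U : ∀ k, Matrix (m k) (m k) R}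
    (hU : ∀ k, U k ∈ unitaryGroup (m k) R) : piKron U ∈ unitaryGroup (∀ k, m k) R := by
  rw [mem_unitaryGroup_iff', star_eq_conjTranspose, conjTranspose_piKron, piKron_mul_piKron]
  simp only [← star_eq_conjTranspose, fun k => Unitary.star_mul_self_of_mem (hU k), piKron_one]

end PiKron

end Matrix

section Entropy

variable {α β : Type*} [Fintype α] [Fintype β]

theorem negMulLog_sum_le_Hsh {p : α → ℝ} (hp : ∀ i, 0 ≤ p i) :
    Real.negMulLog (∑ i, p i) ≤ Hsh p := by
  have hlog : ∀ i, p i * Real.log (p i) ≤ p i * Real.log (∑ j, p j) := fun i => by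
    rcases (hp i).eq_or_lt with h | h
    · simp [← h]
    · exact mul_le_mul_of_nonneg_left (Real.log_le_log h
        (Finset.single_le_sum (fun j _ => hp j) (Finset.mem_univ i))) h.le
  calc Real.negMulLog (∑ i, p i) = ∑ i, -(p i * Real.log (∑ j, p j)) := by
        simp [Real.negMulLog, Finset.sum_mul]
    _ ≤ ∑ i, -(p i * Real.log (p i)) := Finset.sum_le_sum fun i _ => neg_le_neg (hlog i)
    _ = Hsh p := by simp [Hsh, Real.negMulLog]

theorem Hsh_nonneg {p : α → ℝ} (hp : ∀ i, 0 ≤ p i) (hp₁ : ∑ i, p i = 1) : 0 ≤ Hsh p := by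
  simpa [hp₁] using negMulLog_sum_le_Hsh hp

theorem Hsh_mul (p : α → ℝ) (q : β → ℝ) :
    Hsh (fun x : α × β => p x.1 * q x.2) = (∑ j, q j) * Hsh p + (∑ i, p i) * Hsh q := by
  simp only [Hsh, Fintype.sum_prod_type, Real.negMulLog_mul, Finset.sum_add_distrib,
    ← Finset.sum_mul, ← Finset.mul_sum]

theorem Hsh_norm_sq_single {𝕜 : Type*} [RCLike 𝕜] [DecidableEq α] (i₀ : α) :
    Hsh (fun i => ‖(Pi.single i₀ 1 : α → 𝕜) i‖ ^ 2) = 0 :=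
  Finset.sum_eq_zero fun i _ => by rcases eq_or_ne i i₀ with rfl | h <;> simp [*]

end Entropy

theorem ciInf_prod_add_eq_of_nonneg {α β : Type*} [Nonempty α] {f : α → ℝ} {g : β → ℝ}
    (hf : BddBelow (Set.range f)) (hg : ∀ b, 0 ≤ g b) {b₀ : β} (hb₀ : g b₀ = 0) :
    ⨅ x : α × β, f x.1 + g x.2 = ⨅ a, f a := by
  obtain ⟨c, hc⟩ := hf
  have hfg : BddBelow (Set.range fun x : α × β => f x.1 + g x.2) :=
    ⟨c, Set.forall_mem_range.2 fun x => (hc ⟨x.1, rfl⟩).trans (le_add_of_nonneg_right (hg x.2))⟩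
  have : Nonempty β := ⟨b₀⟩
  refine le_antisymm (le_ciInf fun a => ?_) (le_ciInf fun x => ?_)
  · simpa [hb₀] using ciInf_le hfg (a, b₀)
  · exact (ciInf_le ⟨c, hc⟩ x.1).trans (le_add_of_nonneg_right (hg x.2))

section Local

variable {ι : Type*} [Fintype ι] [DecidableEq ι] {d : ι → ℕ}

theorem applyLocal_eq_piKron_mulVec (U : ∀ k, Matrix (Fin (d k)) (Fin (d k)) ℂ)
    (ψ : (∀ k, Fin (d k)) → ℂ) : applyLocal U ψ = piKron U *ᵥ ψ :=
  rfl

theorem sum_norm_sq_applyLocal (U : ∀ k, unitaryGroup (Fin (d k)) ℂ) (ψ : (∀ k, Fin (d k)) → ℂ) :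
    ∑ i, ‖applyLocal (fun k => (U k : Matrix (Fin (d k)) (Fin (d k)) ℂ)) ψ i‖ ^ 2 =
      ∑ i, ‖ψ i‖ ^ 2 := by
  rw [applyLocal_eq_piKron_mulVec]
  exact sum_norm_sq_mulVec_of_mem_unitaryGroup (piKron_mem_unitaryGroup fun k => (U k).2) ψ

theorem bddBelow_range_Hmeas_applyLocal (ψ : (∀ k, Fin (d k)) → ℂ) :
    BddBelow (Set.range fun U : ∀ k, unitaryGroup (Fin (d k)) ℂ =>
      Hmeas (applyLocal (fun k => (U k : Matrix (Fin (d k)) (Fin (d k)) ℂ)) ψ)) := by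
  refine ⟨Real.negMulLog (∑ i, ‖ψ i‖ ^ 2), Set.forall_mem_range.2 fun U => ?_⟩
  rw [← sum_norm_sq_applyLocal U ψ]
  exact negMulLog_sum_le_Hsh fun i => sq_nonneg _

end Local

section Ancilla

variable {ι : Type*} [Fintype ι] [DecidableEq ι]

def prodPiSumUnitEquiv (π : ι ⊕ Unit → Type*) : (∀ a, π (.inl a)) × π (.inr ()) ≃ ∀ k, π k where
  toFun p := Sum.rec p.1 fun _ => p.2
  invFun f := (fun a => f (.inl a), f (.inr ()))
  left_inv _ := rfl
  right_inv f := by funext k; rcases k with a | ⟨⟩ <;> rfl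

variable {D : ι ⊕ Unit → ℕ}

theorem applyLocal_prodPiSumUnitEquiv (U : ∀ a, Matrix (Fin (D (.inl a))) (Fin (D (.inl a))) ℂ)
    (V : Matrix (Fin (D (.inr ()))) (Fin (D (.inr ()))) ℂ) (ψ : (∀ a, Fin (D (.inl a))) → ℂ)
    (φ : Fin (D (.inr ())) → ℂ) (x : (∀ a, Fin (D (.inl a))) × Fin (D (.inr ()))) :
    applyLocal (prodPiSumUnitEquiv (fun k => Matrix (Fin (D k)) (Fin (D k)) ℂ) (U, V))
        (fun j => ψ (fun a => j (.inl a)) * φ (j (.inr ())))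
        (prodPiSumUnitEquiv (fun k => Fin (D k)) x) =
      applyLocal U ψ x.1 * (V *ᵥ φ) x.2 := by
  simp only [applyLocal, mulVec, dotProduct, Finset.sum_mul_sum,
    ← (prodPiSumUnitEquiv fun k => Fin (D k)).sum_comp, Fintype.sum_prod_type,
    Fintype.prod_sum_type]
  refine Finset.sum_congr rfl fun j _ => Finset.sum_congr rfl fun c' _ => ?_
  simp only [prodPiSumUnitEquiv, Equiv.coe_fn_mk, Finset.univ_unique, Finset.prod_singleton]
  ring

theorem Hmeas_applyLocal_prodPiSumUnitEquiv
    (W : (∀ a, unitaryGroup (Fin (D (.inl a))) ℂ) × unitaryGroup (Fin (D (.inr ()))) ℂ)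
    (ψ : (∀ a, Fin (D (.inl a))) → ℂ) {φ : Fin (D (.inr ())) → ℂ} (hφ : ∑ c, ‖φ c‖ ^ 2 = 1) :
    Hmeas (applyLocal (fun k => (prodPiSumUnitEquiv (fun k => unitaryGroup (Fin (D k)) ℂ) W k :
        Matrix (Fin (D k)) (Fin (D k)) ℂ)) (fun j => ψ (fun a => j (.inl a)) * φ (j (.inr ())))) =
      Hmeas (applyLocal (fun a => (W.1 a : Matrix (Fin (D (.inl a))) (Fin (D (.inl a))) ℂ)) ψ) +
        (∑ i, ‖ψ i‖ ^ 2) * Hsh fun c =>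
          ‖((W.2 : Matrix (Fin (D (.inr ()))) (Fin (D (.inr ()))) ℂ) *ᵥ φ) c‖ ^ 2 := by
  have hcoe : (fun k => (prodPiSumUnitEquiv (fun k => unitaryGroup (Fin (D k)) ℂ) W k :
      Matrix (Fin (D k)) (Fin (D k)) ℂ)) = prodPiSumUnitEquiv _ (fun a => (W.1 a : Matrix _ _ ℂ),
        (W.2 : Matrix (Fin (D (.inr ()))) (Fin (D (.inr ()))) ℂ)) := by
    funext k; rcases k with a | ⟨⟩ <;> rfl
  rw [hcoe, Hmeas, ← (prodPiSumUnitEquiv fun k => Fin (D k)).sum_comp]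
  simp only [applyLocal_prodPiSumUnitEquiv, norm_mul, mul_pow]
  refine (Hsh_mul (fun i => ‖applyLocal (fun a => (W.1 a : Matrix _ _ ℂ)) ψ i‖ ^ 2)
    (fun c => ‖((W.2 : Matrix (Fin (D (.inr ()))) (Fin (D (.inr ()))) ℂ) *ᵥ φ) c‖ ^ 2)).trans ?_
  rw [sum_norm_sq_mulVec_of_mem_unitaryGroup W.2.2, hφ, one_mul, sum_norm_sq_applyLocal]
  rfl

end Ancilla

theorem EHmin_ancilla_general {ι : Type*} [Fintype ι] [DecidableEq ι] {d : ι → ℕ} (m : ℕ)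
    (ψ : (∀ k, Fin (d k)) → ℂ)
    (φ : Fin m → ℂ) (hφ : ∑ j, ‖φ j‖ ^ 2 = 1)
    (ψ' : (∀ k : ι ⊕ Unit, Fin (Sum.elim d (fun _ => m) k)) → ℂ)
    (hψ' : ∀ i, ψ' i = ψ (fun a => i (Sum.inl a)) * φ (i (Sum.inr ()))) :
    EHmin ψ' = EHmin ψ := by
  obtain rfl : ψ' = fun i => ψ (fun a => i (Sum.inl a)) * φ (i (Sum.inr ())) := funext hψ'
  have : NeZero m := ⟨by rintro rfl; simp at hφ⟩
  obtain ⟨V₀, hV₀, hV₀φ⟩ := exists_mem_unitaryGroup_mulVec_eq_single 0 hφ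
  have : Nonempty (∀ k, unitaryGroup (Fin (d k)) ℂ) := ⟨fun _ => 1⟩
  rw [EHmin, EHmin,
    ← (prodPiSumUnitEquiv fun k => unitaryGroup (Fin (Sum.elim d (fun _ => m) k)) ℂ).iInf_comp]
  simp only [Hmeas_applyLocal_prodPiSumUnitEquiv (D := Sum.elim d fun _ => m) _ ψ hφ]
  refine ciInf_prod_add_eq_of_nonneg (bddBelow_range_Hmeas_applyLocal ψ)
    (g := fun V : unitaryGroup (Fin m) ℂ =>
      (∑ i, ‖ψ i‖ ^ 2) * Hsh fun c => ‖((V : Matrix (Fin m) (Fin m) ℂ) *ᵥ φ) c‖ ^ 2)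
    (fun V => ?_) (b₀ := ⟨V₀, hV₀⟩) ?_
  · refine mul_nonneg (Finset.sum_nonneg fun i _ => sq_nonneg _)
      (Hsh_nonneg (fun c => sq_nonneg _) ?_)
    rw [sum_norm_sq_mulVec_of_mem_unitaryGroup V.2, hφ]
  · simp only [hV₀φ, Hsh_norm_sq_single, mul_zero]

/-- `E_Hmin` is invariant under attaching an unentangled ancilla: for a multipartite pure
state `ψ` and a single-subsystem unit vector `φ`, `E_Hmin(ψ ⊗ φ) = E_Hmin(ψ)`. -/
theorem EHmin_ancilla {ι : Type*} [Fintype ι] [DecidableEq ι] {d : ι → ℕ} (m : ℕ)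
    (ψ : (∀ k, Fin (d k)) → ℂ) (hψ : ∑ i, ‖ψ i‖ ^ 2 = 1)
    (φ : Fin m → ℂ) (hφ : ∑ j, ‖φ j‖ ^ 2 = 1)
    (ψ' : (∀ k : ι ⊕ Unit, Fin (Sum.elim d (fun _ => m) k)) → ℂ)
    (hψ' : ∀ i, ψ' i = ψ (fun a => i (Sum.inl a)) * φ (i (Sum.inr ()))) :
    EHmin ψ' = EHmin ψ :=
  EHmin_ancilla_general m ψ φ hφ ψ' hψ'
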